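/- arXiv:1007.0097 — 2 statements merged into one kernel-verified Lean document; each statement's English description precedes it below -/
import Mathlib

section
/- Let f, g : (0,∞) → ℝ be convex with f(1) = g(1) = 0. Suppose g(t)/t → ∞ as t → ∞, and let γ₀ := limsup_{t→∞} g(t)/f(t), the limit superior taken in the extended reals. Then for every real γ < γ₀ the supremum of D_g(Q,P) − γ·D_f(Q,P) over two-point distributions is infinite: for every M ∈ ℝ there exist p, q ∈ (0,1) such that, with P = (p, 1−p) and Q = (q, 1−q), one has D_g(Q,P) − γ·D_f(Q,P) > M. -/
open Finset Filter Topology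

/-- The `f`-divergence of the two-point distributions `P = (p, 1-p)` and `Q = (q, 1-q)`. -/
noncomputable def fDiv2 (f : ℝ → ℝ) (p q : ℝ) : ℝ :=
  q * f (p / q) + (1 - q) * f ((1 - p) / (1 - q))

/-!
Write `h := g - γ f`. Since the two-point divergence is linear in the generator,
`D_g(Q,P) - γ D_f(Q,P) = D_h(Q,P)`. Taking `Q = (1/2, 1/2)` and `P = (1/(2t), 1 - 1/(2t))` gives
`D_h(Q,P) = h(t)/(2t) + (1 - 1/(2t)) h(s)` with `s ∈ [1/2, 1]`; the second term is bounded
below because `h` is continuous there, so it suffices that `h(t)/t` is unbounded along some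
`t → ∞`. For `γ ≤ 0` this follows from `g(t)/t → ∞` and the linear lower bound of the convex `f`.
For `γ > 0` pick `γ < γ' < γ₀`: frequently `g(t) > γ' f(t)`, and there
`h = (1 - γ/γ') g + (γ/γ') (g - γ' f) ≥ (1 - γ/γ') g`.
-/

open Set

lemma fDiv2_sub_mul (f g : ℝ → ℝ) (γ p q : ℝ) :
    fDiv2 g p q - γ * fDiv2 f p q = fDiv2 (fun x => g x - γ * f x) p q := by
  simp only [fDiv2]
  ring

lemma ConvexOn.exists_eventually_mul_le {f : ℝ → ℝ} (hf : ConvexOn ℝ (Ioi 0) f)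
    (hf1 : f 1 = 0) :
    ∃ c : ℝ, ∀ᶠ t in atTop, c * t ≤ f t := by
  refine ⟨min (f 2) 0, ?_⟩
  filter_upwards [eventually_ge_atTop 2] with t ht
  have hslope : slope f 1 2 ≤ slope f 1 t :=
    hf.slope_mono (by norm_num) (by norm_num)
      ⟨show (0 : ℝ) < t by linarith, show t ≠ 1 by linarith⟩ ht
  rw [slope_def_field, slope_def_field, hf1, le_div_iff₀ (by linarith)] at hslope
  rcases le_total (f 2) 0 with h2 | h2
  · rw [min_eq_left h2]; nlinarith
  · rw [min_eq_right h2]; nlinarith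

section OrderedField

variable {α : Type*} [Field α] [LinearOrder α] [IsStrictOrderedRing α]

lemma eventually_mul_le_of_tendsto_div_atTop {g : α → α}
    (hg : Tendsto (fun t => g t / t) atTop atTop) (R : α) : ∀ᶠ t in atTop, R * t ≤ g t := by
  filter_upwards [hg.eventually_ge_atTop R, eventually_gt_atTop 0] with t hR ht
  exact (le_div_iff₀ ht).mp hR

lemma mul_lt_of_lt_div_of_nonneg {a b c : α} (ha : 0 < a) (hb : 0 ≤ b) (h : a < b / c) :
    a * c < b := by
  have hc : 0 < c := by
    by_contra! hc
    exact (div_nonpos_of_nonneg_of_nonpos hb hc).not_gt (ha.trans h)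
  exact (lt_div_iff₀ hc).mp h

end OrderedField

section SuperlinearGrowth

variable {f g : ℝ → ℝ} {γ : ℝ}

lemma eventually_mul_le_sub_mul_of_nonpos (hf : ∃ c : ℝ, ∀ᶠ t in atTop, c * t ≤ f t)
    (hg : ∀ R : ℝ, ∀ᶠ t in atTop, R * t ≤ g t) (hγ : γ ≤ 0) (R : ℝ) :
    ∀ᶠ t in atTop, R * t ≤ g t - γ * f t := by
  obtain ⟨c, hc⟩ := hf
  filter_upwards [hg (R + γ * c), hc] with t hgt hft
  nlinarith [mul_le_mul_of_nonpos_left hft hγ]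

lemma frequently_mul_le_sub_mul_of_nonneg {γ' : ℝ} (hfreq : ∃ᶠ t in atTop, γ' < g t / f t)
    (hg : ∀ R : ℝ, ∀ᶠ t in atTop, R * t ≤ g t) (hγ : 0 ≤ γ) (hγγ' : γ < γ') (R : ℝ) :
    ∃ᶠ t in atTop, R * t ≤ g t - γ * f t := by
  have hγ' : 0 < γ' := hγ.trans_lt hγγ'
  have hε : 0 < 1 - γ / γ' := sub_pos.mpr ((div_lt_one hγ').mpr hγγ')
  refine (hfreq.and_eventually ((hg (max (R / (1 - γ / γ')) 0)).and
    (eventually_ge_atTop 0))).mono ?_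
  rintro t ⟨hratio, hgt, ht⟩
  have hg0 : 0 ≤ g t := (mul_nonneg (le_max_right _ _) ht).trans hgt
  have hgf : 0 ≤ g t - γ' * f t := sub_nonneg.mpr (mul_lt_of_lt_div_of_nonneg hγ' hg0 hratio).le
  have hRg : R * t ≤ (1 - γ / γ') * g t := by
    calc R * t = (1 - γ / γ') * (R / (1 - γ / γ') * t) := by
          rw [← mul_assoc, mul_div_cancel₀ R hε.ne']
      _ ≤ (1 - γ / γ') * g t := by
        gcongr
        exact (mul_le_mul_of_nonneg_right (le_max_left _ _) ht).trans hgt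
  calc R * t ≤ (1 - γ / γ') * g t := hRg
    _ ≤ (1 - γ / γ') * g t + γ / γ' * (g t - γ' * f t) :=
      le_add_of_nonneg_right (mul_nonneg (div_nonneg hγ hγ'.le) hgf)
    _ = g t - γ * f t := by field_simp; ring

lemma frequently_mul_le_sub_mul (hf : ConvexOn ℝ (Ioi 0) f) (hf1 : f 1 = 0)
    (hgs : Tendsto (fun t => g t / t) atTop atTop)
    (hγ : (γ : EReal) < limsup (fun t => ((g t / f t : ℝ) : EReal)) atTop) (R : ℝ) :
    ∃ᶠ t in atTop, R * t ≤ g t - γ * f t := by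
  have hg := eventually_mul_le_of_tendsto_div_atTop hgs
  rcases le_total γ 0 with hγ0 | hγ0
  · exact Eventually.frequently <|
      eventually_mul_le_sub_mul_of_nonpos (hf.exists_eventually_mul_le hf1) hg hγ0 R
  · obtain ⟨γ', hγγ', hγ'⟩ := EReal.exists_between_coe_real hγ
    have hfreq : ∃ᶠ t in atTop, γ' < g t / f t := by
      simpa only [EReal.coe_lt_coe_iff] using frequently_lt_of_lt_limsup (by isBoundedDefault) hγ'
    exact frequently_mul_le_sub_mul_of_nonneg hfreq hg hγ0 (EReal.coe_lt_coe_iff.mp hγγ') R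

end SuperlinearGrowth

lemma exists_lt_fDiv2_of_frequently_mul_le {h : ℝ → ℝ} (hbdd : BddBelow (h '' Icc (1 / 2) 1))
    (hh : ∀ R : ℝ, ∃ᶠ t in atTop, R * t ≤ h t) (M : ℝ) :
    ∃ p q : ℝ, p ∈ Ioo (0 : ℝ) 1 ∧ q ∈ Ioo (0 : ℝ) 1 ∧ M < fDiv2 h q p := by
  obtain ⟨b, hb⟩ := hbdd
  set m := min b 0
  obtain ⟨t, hRt, ht⟩ :=
    ((hh (2 * (M - m) + 2)).and_eventually (eventually_ge_atTop 1)).exists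
  set p := 1 / (2 * t) with hp_def
  have hp0 : 0 < p := by positivity
  have hp1 : p ≤ 1 / 2 := by
    rw [hp_def, div_le_div_iff₀ (by positivity) (by norm_num)]; linarith
  have hs : (1 - 1 / 2) / (1 - p) ∈ Icc (1 / 2 : ℝ) 1 := by
    constructor
    · rw [le_div_iff₀ (by linarith)]; linarith
    · rw [div_le_one (by linarith)]; linarith
  have hhs : m ≤ h ((1 - 1 / 2) / (1 - p)) := (min_le_left b 0).trans (hb ⟨_, hs, rfl⟩)
  refine ⟨p, 1 / 2, ⟨hp0, by linarith⟩, by norm_num, ?_⟩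
  have hqp : 1 / 2 / p = t := by rw [hp_def]; field_simp
  have hRp : p * ((2 * (M - m) + 2) * t) = M - m + 1 := by rw [hp_def]; field_simp
  calc M < p * ((2 * (M - m) + 2) * t) + m := by linarith
    _ ≤ p * h t + (1 - p) * h ((1 - 1 / 2) / (1 - p)) := by
      nlinarith [mul_le_mul_of_nonneg_left hRt hp0.le, min_le_right b 0]
    _ = fDiv2 h (1 / 2) p := by rw [fDiv2, hqp]

theorem sup_g_sub_gamma_f_reversed_eq_top_of_limsup_atTop_general (f g : ℝ → ℝ)
    (hf : ConvexOn ℝ (Set.Ioi 0) f) (hg : ConvexOn ℝ (Set.Ioi 0) g)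
    (hf1 : f 1 = 0)
    (hgs : Tendsto (fun t => g t / t) atTop atTop)
    (γ : ℝ)
    (hγ : (γ : EReal) < limsup (fun t => ((g t / f t : ℝ) : EReal)) atTop) :
    ∀ M : ℝ, ∃ p q : ℝ, p ∈ Set.Ioo (0:ℝ) 1 ∧ q ∈ Set.Ioo (0:ℝ) 1 ∧
      fDiv2 g q p - γ * fDiv2 f q p > M := by
  intro M
  have hsub : Icc (1 / 2 : ℝ) 1 ⊆ Ioi 0 := fun x hx => lt_of_lt_of_le (by norm_num) hx.1
  have hcont : ContinuousOn (fun x => g x - γ * f x) (Icc (1 / 2) 1) :=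
    ((hg.continuousOn isOpen_Ioi).mono hsub).sub
      (continuousOn_const.mul ((hf.continuousOn isOpen_Ioi).mono hsub))
  obtain ⟨p, q, hp, hq, hM⟩ := exists_lt_fDiv2_of_frequently_mul_le
    (isCompact_Icc.bddBelow_image hcont) (frequently_mul_le_sub_mul hf hf1 hgs hγ) M
  exact ⟨p, q, hp, hq, by rwa [fDiv2_sub_mul]⟩

/-- If `g(t)/t → ∞` as `t → ∞` and `γ` is below `γ₀ = limsup_{t→∞} g(t)/f(t)`, then
`D_g(Q,P) − γ·D_f(Q,P)` is unbounded above over two-point distributions. -/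
theorem sup_g_sub_gamma_f_reversed_eq_top_of_limsup_atTop (f g : ℝ → ℝ)
    (hf : ConvexOn ℝ (Set.Ioi 0) f) (hg : ConvexOn ℝ (Set.Ioi 0) g)
    (hf1 : f 1 = 0) (hg1 : g 1 = 0)
    (hgs : Tendsto (fun t => g t / t) atTop atTop)
    (γ : ℝ)
    (hγ : (γ : EReal) < limsup (fun t => ((g t / f t : ℝ) : EReal)) atTop) :
    ∀ M : ℝ, ∃ p q : ℝ, p ∈ Set.Ioo (0:ℝ) 1 ∧ q ∈ Set.Ioo (0:ℝ) 1 ∧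
      fDiv2 g q p - γ * fDiv2 f q p > M :=
  sup_g_sub_gamma_f_reversed_eq_top_of_limsup_atTop_general f g hf hg hf1 hgs γ hγ
end

section
/- Let f, g : (0,∞) → ℝ be convex, twice continuously differentiable functions with f(1) = g(1) = 0, f'(1) = g'(1) = 0, f''(1) > 0 and g''(1) > 0. Suppose liminf_{t→0+} g(t)/f(t) > 0 and liminf_{t→∞} g(t)/f(t) > 0 (limits inferior taken in the extended reals). Then there exists β > 0 such that g(t) ≥ β·f(t) for all t ∈ (0,∞). -/
/-!
Convexity and `f'(1) = g'(1) = 0` make `1` a global minimum, so `f, g ≥ 0`; since `g''(1) > 0`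
the minimum of `g` is strict, hence `g > 0` away from `1`. Because `f ≥ 0`, bounds `g ≥ c f` on
finitely many pieces of `(0, ∞)` combine into one, with the least constant. Near `0` and `∞` the
`liminf` hypotheses give such a bound. Near `1` both functions vanish to second order, and for
small `a > 0` the second derivative of `g - a f` at `1` is still positive, so `g ≥ a f` there by
the second-derivative test. On a compact interval minus that neighbourhood `g` has a positive
minimum and `f` is bounded above.
-/

open Filter Topology Set

theorem ConvexOn.isMinOn_of_deriv_eq_zero {S : Set ℝ} {f : ℝ → ℝ} {x : ℝ}
    (hf : ConvexOn ℝ S f) (hx : x ∈ interior S) (hd : DifferentiableAt ℝ f x)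
    (h : deriv f x = 0) : IsMinOn f S x :=
  hf.isMinOn_of_rightDeriv_eq_zero hx <| by
    rw [hd.hasDerivAt.hasDerivWithinAt.derivWithin (uniqueDiffWithinAt_Ioi x), h]

theorem ConvexOn.lt_of_eventually_nhdsNE_lt {E : Type*} [NormedAddCommGroup E]
    [NormedSpace ℝ E] {s : Set E} {f : E → ℝ} {x : E} (hf : ConvexOn ℝ s f) (hx : x ∈ s)
    (hloc : ∀ᶠ y in 𝓝[≠] x, f x < f y) {y : E} (hy : y ∈ s) (hyx : y ≠ x) : f x < f y := by
  have hline : Tendsto (AffineMap.lineMap x y) (𝓝[>] (0 : ℝ)) (𝓝[≠] x) := by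
    refine tendsto_nhdsWithin_of_tendsto_nhds_of_eventually_within _ ?_ ?_
    · simpa using ((AffineMap.lineMap_continuous (p := x) (q := y)).tendsto (0 : ℝ)).mono_left
        nhdsWithin_le_nhds
    · filter_upwards [self_mem_nhdsWithin] with θ hθ
      simp [AffineMap.lineMap_eq_left_iff, hyx.symm, (mem_Ioi.mp hθ).ne']
  obtain ⟨θ, hlt, hθ0, hθ1⟩ := ((hline.eventually hloc).and (Ioo_mem_nhdsGT one_pos)).exists
  have hconv := hf.2 hx hy (sub_nonneg.mpr hθ1.le) hθ0.le (sub_add_cancel 1 θ)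
  rw [AffineMap.lineMap_apply_module] at hlt
  simp only [smul_eq_mul] at hconv
  -- `f x < f z ≤ (1 - θ) f x + θ f y` for the point `z = lineMap x y θ`, and `θ > 0`
  nlinarith

theorem eventually_le_of_iteratedDeriv_two_lt {u v : ℝ → ℝ} {x : ℝ} (hu : ContDiffAt ℝ 2 u x)
    (hv : ContDiffAt ℝ 2 v x) (h0 : u x = v x) (h1 : deriv u x = deriv v x)
    (h2 : iteratedDeriv 2 u x < iteratedDeriv 2 v x) : ∀ᶠ t in 𝓝 x, u t ≤ v t := by
  have hmin : IsLocalMin (v - u) x := by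
    refine isLocalMin_of_deriv_deriv_pos ?_ ?_ (hv.continuousAt.sub hu.continuousAt)
    · have h2' := iteratedDeriv_sub hv hu ▸ sub_pos.mpr h2
      rwa [iteratedDeriv_succ, iteratedDeriv_one] at h2'
    · rw [deriv_sub (hv.differentiableAt (by norm_num)) (hu.differentiableAt (by norm_num)), h1,
        sub_self]
  filter_upwards [hmin] with t ht
  simpa [h0] using ht

theorem exists_pos_eventually_mul_le_of_iteratedDeriv_two_pos {f g : ℝ → ℝ} {x : ℝ}
    (hf : ContDiffAt ℝ 2 f x) (hg : ContDiffAt ℝ 2 g x) (hf0 : f x = 0) (hg0 : g x = 0)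
    (hf1 : deriv f x = 0) (hg1 : deriv g x = 0) (hg2 : 0 < iteratedDeriv 2 g x) :
    ∃ a > 0, ∀ᶠ t in 𝓝 x, a * f t ≤ g t := by
  have hsmall : ∀ᶠ a in 𝓝[>] (0 : ℝ), a * iteratedDeriv 2 f x < iteratedDeriv 2 g x :=
    nhdsWithin_le_nhds <| ((continuous_mul_const _).tendsto' 0 0 (zero_mul _)).eventually
      (gt_mem_nhds hg2)
  obtain ⟨a, ha, ha0⟩ := (hsmall.and self_mem_nhdsWithin).exists
  refine ⟨a, ha0, eventually_le_of_iteratedDeriv_two_lt (hf.const_smul a) hg ?_ ?_ ?_⟩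
  · simp [hf0, hg0]
  · simp [deriv_const_mul_field, hf1, hg1]
  · simpa using ha

theorem ConvexOn.pos_of_iteratedDeriv_two_pos {s : Set ℝ} {g : ℝ → ℝ} {x : ℝ}
    (hg : ConvexOn ℝ s g) (hx : x ∈ s) (hC : ContDiffAt ℝ 2 g x) (h0 : g x = 0)
    (h1 : deriv g x = 0) (h2 : 0 < iteratedDeriv 2 g x) {y : ℝ} (hy : y ∈ s) (hyx : y ≠ x) :
    0 < g y := by
  obtain ⟨a, ha, hsq⟩ := exists_pos_eventually_mul_le_of_iteratedDeriv_two_pos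
    (f := fun t => (t - x) ^ 2) (by fun_prop) hC (by simp) h0 (by simp) h1 h2
  -- `g ≥ a (t - x)²` near `x` makes `x` a strict local minimum, which convexity globalizes.
  refine h0 ▸ hg.lt_of_eventually_nhdsNE_lt hx ?_ hy hyx
  filter_upwards [nhdsWithin_le_nhds hsq, self_mem_nhdsWithin] with t ht htx
  rw [h0]
  exact (mul_pos ha (sq_pos_of_ne_zero (sub_ne_zero.mpr htx))).trans_le ht

def DominatesOn {α : Type*} (g f : α → ℝ) (s : Set α) : Prop :=
  ∃ c > 0, ∀ x ∈ s, c * f x ≤ g x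

namespace DominatesOn

variable {α : Type*} {f g : α → ℝ} {s t : Set α}

theorem union (hf : ∀ x ∈ s ∪ t, 0 ≤ f x) (hs : DominatesOn g f s) (ht : DominatesOn g f t) :
    DominatesOn g f (s ∪ t) := by
  obtain ⟨c, hc, hcs⟩ := hs
  obtain ⟨d, hd, hdt⟩ := ht
  refine ⟨min c d, lt_min hc hd, fun x hx => ?_⟩
  rcases hx with hxs | hxt
  · exact (mul_le_mul_of_nonneg_right (min_le_left c d) (hf x (.inl hxs))).trans (hcs x hxs)
  · exact (mul_le_mul_of_nonneg_right (min_le_right c d) (hf x (.inr hxt))).trans (hdt x hxt)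

end DominatesOn

theorem IsCompact.dominatesOn {α : Type*} [TopologicalSpace α] {K : Set α} {f g : α → ℝ}
    (hK : IsCompact K) (hf : ContinuousOn f K) (hg : ContinuousOn g K)
    (hpos : ∀ x ∈ K, 0 < g x) : DominatesOn g f K := by
  obtain ⟨m, hm, hmg⟩ := hK.exists_forall_le' hg hpos
  obtain ⟨C, hC⟩ := hK.bddAbove_image hf
  have hC1 : 0 < max C 1 := lt_max_of_lt_right one_pos
  refine ⟨m / max C 1, div_pos hm hC1, fun x hx => ?_⟩
  calc m / max C 1 * f x ≤ m / max C 1 * max C 1 :=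
        mul_le_mul_of_nonneg_left ((hC (mem_image_of_mem f hx)).trans (le_max_left C 1))
          (div_pos hm hC1).le
    _ = m := div_mul_cancel₀ m hC1.ne'
    _ ≤ g x := hmg x hx

theorem IsCompact.dominatesOn_of_eventually {α : Type*} [TopologicalSpace α] {K : Set α}
    {f g : α → ℝ} {x : α} (hK : IsCompact K) (hf : ContinuousOn f K) (hg : ContinuousOn g K)
    (hf0 : ∀ t ∈ K, 0 ≤ f t) (hx : ∃ a > 0, ∀ᶠ t in 𝓝 x, a * f t ≤ g t)
    (hpos : ∀ t ∈ K, t ≠ x → 0 < g t) : DominatesOn g f K := by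
  obtain ⟨a, ha, hloc⟩ := hx
  obtain ⟨U, hUsub, hU, hxU⟩ := mem_nhds_iff.mp hloc
  have hout : DominatesOn g f (K \ U) :=
    (hK.diff hU).dominatesOn (hf.mono sdiff_subset) (hg.mono sdiff_subset)
      fun t ht => hpos t ht.1 fun htx => ht.2 (htx ▸ hxU)
  have hin : DominatesOn g f (K ∩ U) := ⟨a, ha, fun t ht => hUsub ht.2⟩
  simpa only [sdiff_union_inter] using
    hout.union (by rwa [sdiff_union_inter]) hin

theorem exists_pos_eventually_mul_le_of_liminf_pos {α : Type*} {l : Filter α} {f g : α → ℝ}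
    (hg : ∀ᶠ t in l, 0 ≤ g t)
    (h : (0 : EReal) < liminf (fun t => ((g t / f t : ℝ) : EReal)) l) :
    ∃ c > 0, ∀ᶠ t in l, c * f t ≤ g t := by
  obtain ⟨c, hc0, hc⟩ := EReal.exists_between_coe_real h
  refine ⟨c, EReal.coe_pos.mp hc0, ?_⟩
  filter_upwards [eventually_lt_of_lt_liminf hc, hg] with t hlt hgt
  rcases le_or_gt (f t) 0 with hft | hft
  · exact (mul_nonpos_of_nonneg_of_nonpos (EReal.coe_pos.mp hc0).le hft).trans hgt
  · exact ((lt_div_iff₀ hft).mp (EReal.coe_lt_coe_iff.mp hlt)).le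

theorem dominatesOn_Ioi_of_nhdsGT_of_atTop {f g : ℝ → ℝ} (hf : ∀ t ∈ Ioi 0, 0 ≤ f t)
    (h₀ : ∃ c > 0, ∀ᶠ t in 𝓝[>] 0, c * f t ≤ g t) (h₁ : ∃ c > 0, ∀ᶠ t in atTop, c * f t ≤ g t)
    (hmid : ∀ δ M : ℝ, 0 < δ → DominatesOn g f (Icc δ M)) : DominatesOn g f (Ioi 0) := by
  obtain ⟨c₀, hc₀, h₀⟩ := h₀
  obtain ⟨δ, hδ, hδsub⟩ := mem_nhdsGT_iff_exists_Ioo_subset.mp h₀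
  obtain ⟨c₁, hc₁, h₁⟩ := h₁
  obtain ⟨M, hM, hMsub⟩ := (atTop_basis_Ioi' 0).eventually_iff.mp h₁
  have hpos : Ioo 0 δ ∪ Icc δ M ∪ Ioi M ⊆ Ioi 0 :=
    union_subset (union_subset Ioo_subset_Ioi_self fun t ht => hδ.trans_le ht.1)
      (Ioi_subset_Ioi hM.le)
  have hcover : Ioi 0 ⊆ Ioo 0 δ ∪ Icc δ M ∪ Ioi M := fun t (ht : 0 < t) => by
    rcases lt_or_ge t δ with htδ | htδ
    · exact .inl (.inl ⟨ht, htδ⟩)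
    rcases le_or_gt t M with htM | htM
    exacts [.inl (.inr ⟨htδ, htM⟩), .inr htM]
  obtain ⟨β, hβ, hβle⟩ :=
    (DominatesOn.union (fun t ht => hf t (hpos (.inl ht))) ⟨c₀, hc₀, fun t ht => hδsub ht⟩
      (hmid δ M hδ)).union (fun t ht => hf t (hpos ht)) ⟨c₁, hc₁, hMsub⟩
  exact ⟨β, hβ, fun t ht => hβle t (hcover ht)⟩

theorem exists_beta_pointwise_bound_general (f g : ℝ → ℝ)
    (hf : ConvexOn ℝ (Set.Ioi 0) f) (hg : ConvexOn ℝ (Set.Ioi 0) g)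
    (hfC2 : ContDiffOn ℝ 2 f (Set.Ioi 0)) (hgC2 : ContDiffOn ℝ 2 g (Set.Ioi 0))
    (hf1 : f 1 = 0) (hg1 : g 1 = 0)
    (hf'1 : deriv f 1 = 0) (hg'1 : deriv g 1 = 0)
    (hg''1 : 0 < iteratedDeriv 2 g 1)
    (hlim0 : (0 : EReal) < liminf (fun t => ((g t / f t : ℝ) : EReal)) (𝓝[>] (0:ℝ)))
    (hlimtop : (0 : EReal) < liminf (fun t => ((g t / f t : ℝ) : EReal)) atTop) :
    ∃ β > (0:ℝ), ∀ t : ℝ, 0 < t → g t ≥ β * f t := by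
  have h1 : (1 : ℝ) ∈ Ioi 0 := mem_Ioi.mpr one_pos
  have hfC2' := hfC2.contDiffAt (Ioi_mem_nhds one_pos)
  have hgC2' := hgC2.contDiffAt (Ioi_mem_nhds one_pos)
  have hf0 : ∀ t ∈ Ioi (0 : ℝ), 0 ≤ f t := fun t ht =>
    hf1.symm.trans_le <| hf.isMinOn_of_deriv_eq_zero (by rwa [interior_Ioi])
      (hfC2'.differentiableAt two_ne_zero) hf'1 ht
  have hg0 : ∀ t ∈ Ioi (0 : ℝ), 0 ≤ g t := fun t ht =>
    hg1.symm.trans_le <| hg.isMinOn_of_deriv_eq_zero (by rwa [interior_Ioi])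
      (hgC2'.differentiableAt two_ne_zero) hg'1 ht
  have hnear1 := exists_pos_eventually_mul_le_of_iteratedDeriv_two_pos hfC2' hgC2' hf1 hg1 hf'1
    hg'1 hg''1
  obtain ⟨β, hβ, hβle⟩ := dominatesOn_Ioi_of_nhdsGT_of_atTop hf0
    (exists_pos_eventually_mul_le_of_liminf_pos (eventually_nhdsWithin_of_forall hg0) hlim0)
    (exists_pos_eventually_mul_le_of_liminf_pos ((eventually_gt_atTop 0).mono hg0) hlimtop)
    fun δ M hδ => by
      have hsub : Icc δ M ⊆ Ioi 0 := fun t ht => hδ.trans_le ht.1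
      exact isCompact_Icc.dominatesOn_of_eventually (hfC2.continuousOn.mono hsub)
        (hgC2.continuousOn.mono hsub) (fun t ht => hf0 t (hsub ht)) hnear1
        fun t ht => hg.pos_of_iteratedDeriv_two_pos h1 hgC2' hg1 hg'1 hg''1 (hsub ht)
  exact ⟨β, hβ, hβle⟩

/-- Under regularity at `1` and positive liminfs of `g/f` at `0+` and `∞`, there is `β > 0`
with `g(t) ≥ β·f(t)` for all `t > 0`. -/
theorem exists_beta_pointwise_bound (f g : ℝ → ℝ)
    (hf : ConvexOn ℝ (Set.Ioi 0) f) (hg : ConvexOn ℝ (Set.Ioi 0) g)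
    (hfC2 : ContDiffOn ℝ 2 f (Set.Ioi 0)) (hgC2 : ContDiffOn ℝ 2 g (Set.Ioi 0))
    (hf1 : f 1 = 0) (hg1 : g 1 = 0)
    (hf'1 : deriv f 1 = 0) (hg'1 : deriv g 1 = 0)
    (hf''1 : 0 < iteratedDeriv 2 f 1) (hg''1 : 0 < iteratedDeriv 2 g 1)
    (hlim0 : (0 : EReal) < liminf (fun t => ((g t / f t : ℝ) : EReal)) (𝓝[>] (0:ℝ)))
    (hlimtop : (0 : EReal) < liminf (fun t => ((g t / f t : ℝ) : EReal)) atTop) :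
    ∃ β > (0:ℝ), ∀ t : ℝ, 0 < t → g t ≥ β * f t :=
  exists_beta_pointwise_bound_general f g hf hg hfC2 hgC2 hf1 hg1 hf'1 hg'1 hg''1 hlim0 hlimtop
end
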